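/- arXiv:1901.01767 — 2 statements merged into one kernel-verified Lean document; each statement's English description precedes it below -/
import Mathlib

section
/- Let H be a complex Hilbert space, B : H → H a bounded self-adjoint positive semidefinite operator, and λ ∈ ℂ with Re(λ) ≥ 0. Suppose T : H → H is bounded, tr : H → L² bounded, and for every f there is a unique u with λ d (tr u, tr v) + B-form(u,v) = d (f, tr v) for all v, where the B-form is coercive on H with constant c₀ and d > 0. Then ‖tr u‖ ≤ M (1 + |λ|)^{−1} ‖f‖ for a constant M independent of λ and f. -/
theorem stmt8 {H H₂ : Type*} [NormedAddCommGroup H] [InnerProductSpace ℂ H] [CompleteSpace H]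
    [NormedAddCommGroup H₂] [InnerProductSpace ℂ H₂] [CompleteSpace H₂]
    (B : H →L[ℂ] H) (hB : IsSelfAdjoint B)
    (hBpos : ∀ x : H, 0 ≤ (inner ℂ (B x) x : ℂ).re)
    (T : H →L[ℂ] H)
    (tr : H →L[ℂ] H₂)
    (d : ℝ) (hd : 0 < d)
    (c₀ : ℝ) (hc₀ : 0 < c₀) (hcoer : ∀ x : H, c₀ * ‖x‖ ^ 2 ≤ (inner ℂ (B x) x : ℂ).re) :
    ∃ M : ℝ, 0 < M ∧ ∀ (lam : ℂ), 0 ≤ lam.re → ∀ (f : H₂) (u : H),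
      (∀ v : H, lam * (d : ℂ) * (inner ℂ (tr u) (tr v) : ℂ) + (inner ℂ (B u) v : ℂ) =
        (d : ℂ) * (inner ℂ f (tr v) : ℂ)) →
      ‖tr u‖ ≤ M * (1 + ‖lam‖)⁻¹ * ‖f‖ := by
  refine ⟨d * ‖tr‖ ^ 2 / c₀ + 2, by positivity, ?_⟩
  intro lam hlam f u heq
  -- basic quantities
  have key := heq u
  have hinner : (inner ℂ (tr u) (tr u) : ℂ) = ((‖tr u‖ : ℂ))^2 :=
    inner_self_eq_norm_sq_to_K (𝕜 := ℂ) (tr u)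
  rw [hinner] at key
  have hEconj : (starRingEnd ℂ) (inner ℂ (B u) u : ℂ) = (inner ℂ (B u) u : ℂ) := by
    rw [inner_conj_symm]
    nth_rewrite 1 [← hB.adjoint_eq]
    rw [ContinuousLinearMap.adjoint_inner_right]
  have hEim : (inner ℂ (B u) u : ℂ).im = 0 := Complex.conj_eq_iff_im.mp hEconj
  have hEre : c₀ * ‖u‖ ^ 2 ≤ (inner ℂ (B u) u : ℂ).re := hcoer u
  have hEre0 : 0 ≤ (inner ℂ (B u) u : ℂ).re := hBpos u
  have hgabs : ‖(inner ℂ f (tr u) : ℂ)‖ ≤ ‖f‖ * ‖tr u‖ := by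
    exact norm_inner_le_norm f (tr u)
  have hgre : (inner ℂ f (tr u) : ℂ).re ≤ ‖f‖ * ‖tr u‖ :=
    le_trans (Complex.re_le_norm _) hgabs
  have hgim : |(inner ℂ f (tr u) : ℂ).im| ≤ ‖f‖ * ‖tr u‖ :=
    le_trans (Complex.abs_im_le_norm _) hgabs
  have httr : ‖tr u‖ ≤ ‖tr‖ * ‖u‖ := tr.le_opNorm u
  have hre := congrArg Complex.re key
  have him := congrArg Complex.im key
  simp only [Complex.add_re, Complex.add_im, Complex.mul_re, Complex.mul_im,
    Complex.ofReal_re, Complex.ofReal_im, ← Complex.ofReal_pow] at hre him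
  -- abstract into real variables
  obtain ⟨t, ht0, htdef⟩ : ∃ t : ℝ, 0 ≤ t ∧ t = ‖tr u‖ := ⟨‖tr u‖, norm_nonneg _, rfl⟩
  obtain ⟨E, hE⟩ : ∃ E : ℂ, E = (inner ℂ (B u) u : ℂ) := ⟨_, rfl⟩
  obtain ⟨g, hg⟩ : ∃ g : ℂ, g = (inner ℂ f (tr u) : ℂ) := ⟨_, rfl⟩
  obtain ⟨nf, hnf0, hnf⟩ : ∃ nf : ℝ, 0 ≤ nf ∧ nf = ‖f‖ := ⟨‖f‖, norm_nonneg _, rfl⟩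
  obtain ⟨nt, hnt0, hnt⟩ : ∃ nt : ℝ, 0 ≤ nt ∧ nt = ‖tr‖ := ⟨‖tr‖, norm_nonneg _, rfl⟩
  obtain ⟨nu, hnu0, hnu⟩ : ∃ nu : ℝ, 0 ≤ nu ∧ nu = ‖u‖ := ⟨‖u‖, norm_nonneg _, rfl⟩
  obtain ⟨a, ha⟩ : ∃ a : ℝ, a = lam.re := ⟨_, rfl⟩
  obtain ⟨b, hb⟩ : ∃ b : ℝ, b = lam.im := ⟨_, rfl⟩
  obtain ⟨s, hs⟩ : ∃ s : ℝ, s = ‖lam‖ := ⟨_, rfl⟩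
  rw [← htdef, ← hnf, ← hnt, ← hs]
  rw [← hE, ← hg] at hre him
  rw [← htdef] at hre him hgre hgim
  rw [← ha, ← hb] at hre him
  rw [← ha] at hlam
  rw [← hE] at hEim hEre hEre0
  rw [← hg] at hgre hgim
  rw [← hnf] at hgre hgim
  rw [← htdef, ← hnt, ← hnu] at httr
  rw [← hnu] at hEre
  have hsle : s ≤ a + |b| := by
    rw [hs, ha, hb]; rw [ha] at hlam
    calc ‖lam‖ ≤ |lam.re| + |lam.im| := Complex.norm_le_abs_re_add_abs_im lam
    _ = lam.re + |lam.im| := by rw [abs_of_nonneg hlam]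
  have hspos : (0:ℝ) < 1 + s := by rw [hs]; positivity
  clear key hinner hEconj htdef hE hg hnf hnt hnu ha hb hs hgabs heq
  -- hre : (a*d - b*0)*t^2 - (a*0 + b*d)*0 + E.re = d*g.re - 0*g.im
  have hre' : a * (d * t^2) + E.re = d * g.re := by linear_combination hre
  have him' : b * (d * t^2) = d * g.im := by linear_combination him - hEim
  have hb' : |b| * (d * t^2) = d * |g.im| := by
    calc |b| * (d * t^2) = |b * (d * t^2)| := by
          rw [abs_mul, abs_of_nonneg (by positivity : (0:ℝ) ≤ d * t^2)]
      _ = |d * g.im| := by rw [him']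
      _ = d * |g.im| := by rw [abs_mul, abs_of_pos hd]
  have hatr : a * (d * t^2) ≤ d * (nf * t) := by
    have h3 : d * g.re ≤ d * (nf * t) := mul_le_mul_of_nonneg_left hgre hd.le
    linarith [hre', hEre0, h3]
  have hbtr : |b| * (d * t^2) ≤ d * (nf * t) := by
    have h3 : d * |g.im| ≤ d * (nf * t) := mul_le_mul_of_nonneg_left hgim hd.le
    linarith [hb', h3]
  have hEu : c₀ * nu ^ 2 ≤ d * (nf * t) := by
    have h3 : d * g.re ≤ d * (nf * t) := mul_le_mul_of_nonneg_left hgre hd.le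
    have h4 : 0 ≤ a * (d * t^2) := mul_nonneg hlam (by positivity)
    linarith [hre', hEre, h3, h4]
  clear hre him him' hb' hre' hEim hEre hEre0 hgre hgim
  clear E g hlam lam B T tr f u hB hBpos hcoer
  -- main inequality
  suffices h : t * (1 + s) ≤ (d * nt ^ 2 / c₀ + 2) * nf by
    rw [show (d * nt ^ 2 / c₀ + 2) * (1 + s)⁻¹ * nf
        = ((d * nt ^ 2 / c₀ + 2) * nf) / (1 + s) by ring]
    rw [le_div_iff₀ hspos]
    linarith [h]
  rcases eq_or_lt_of_le ht0 with h0 | htpos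
  · rw [← h0, zero_mul]
    positivity
  have h1 : s * t ≤ 2 * nf := by
    have hmul : s * (d * t^2) ≤ (a + |b|) * (d * t^2) :=
      mul_le_mul_of_nonneg_right hsle (by positivity)
    have hexp : (a + |b|) * (d * t^2) = a * (d * t^2) + |b| * (d * t^2) := by ring
    have hstep : s * (d * t^2) ≤ 2 * (d * (nf * t)) := by linarith
    have hdt : 0 < d * t := mul_pos hd htpos
    rw [← mul_le_mul_iff_of_pos_right hdt]
    calc s * t * (d * t) = s * (d * t^2) := by ring
      _ ≤ 2 * (d * (nf * t)) := hstep
      _ = 2 * nf * (d * t) := by ring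
  have h2 : t ≤ d * nt ^ 2 / c₀ * nf := by
    have ht2 : t ^ 2 ≤ nt ^ 2 * nu ^ 2 := by
      nlinarith [mul_le_mul httr httr ht0 (mul_nonneg hnt0 hnu0)]
    have hct : c₀ * t ^ 2 ≤ nt ^ 2 * (d * (nf * t)) := by
      nlinarith [mul_le_mul_of_nonneg_left ht2 hc₀.le,
        mul_le_mul_of_nonneg_left hEu (by positivity : (0:ℝ) ≤ nt ^ 2)]
    rw [div_mul_eq_mul_div, le_div_iff₀ hc₀, ← mul_le_mul_iff_of_pos_right htpos]
    calc t * c₀ * t = c₀ * t ^ 2 := by ring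
      _ ≤ nt ^ 2 * (d * (nf * t)) := hct
      _ = d * nt ^ 2 * nf * t := by ring
  calc t * (1 + s) = t + s * t := by ring
    _ ≤ d * nt ^ 2 / c₀ * nf + 2 * nf := by linarith
    _ = (d * nt ^ 2 / c₀ + 2) * nf := by ring
end

section
/- Let a < b, and for each j let θ_j : [a,b] → ℝ be absolutely continuous solving θ_j' + μ θ_j = ρ_j' with μ ≥ 0. Then for all t ∈ [a,b]: (1/2) t θ(t)² − (1/2) a θ(a)² + μ ∫_a^t τ θ(τ)² dτ ≤ (∫_a^t τ² ρ'(τ)² dτ)^{1/2} (∫_a^t θ(τ)² dτ)^{1/2} + (1/2) ∫_a^t θ(τ)² dτ. -/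
open MeasureTheory

lemma cs_interval (a t : ℝ) (hat : a ≤ t) (f g : ℝ → ℝ)
    (hf : ContinuousOn f (Set.Icc a t)) (hg : ContinuousOn g (Set.Icc a t)) :
    (∫ τ in a..t, f τ * g τ) ≤
      Real.sqrt (∫ τ in a..t, (f τ)^2) * Real.sqrt (∫ τ in a..t, (g τ)^2) := by
  have hu : Set.uIcc a t = Set.Icc a t := Set.uIcc_of_le hat
  have hf' : ContinuousOn f (Set.uIcc a t) := hu ▸ hf
  have hg' : ContinuousOn g (Set.uIcc a t) := hu ▸ hg
  have hif2 : IntervalIntegrable (fun τ => (f τ)^2) volume a t :=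
    (hf'.pow 2).intervalIntegrable
  have hig2 : IntervalIntegrable (fun τ => (g τ)^2) volume a t :=
    (hg'.pow 2).intervalIntegrable
  have hifg : IntervalIntegrable (fun τ => f τ * g τ) volume a t :=
    (hf'.mul hg').intervalIntegrable
  set A := ∫ τ in a..t, (f τ)^2 with hA
  set B := ∫ τ in a..t, f τ * g τ with hB
  set C := ∫ τ in a..t, (g τ)^2 with hC
  have hA0 : 0 ≤ A := intervalIntegral.integral_nonneg hat (fun x _ => sq_nonneg _)
  have hC0 : 0 ≤ C := intervalIntegral.integral_nonneg hat (fun x _ => sq_nonneg _)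
  have hquad : ∀ l : ℝ, 0 ≤ A * (l * l) + (2 * B) * l + C := by
    intro l
    have h1 : (0:ℝ) ≤ ∫ τ in a..t, (l * f τ + g τ)^2 :=
      intervalIntegral.integral_nonneg hat (fun x _ => sq_nonneg _)
    have h2 : (∫ τ in a..t, (l * f τ + g τ)^2)
        = l^2 * A + 2 * l * B + C := by
      have : (fun τ => (l * f τ + g τ)^2)
          = fun τ => l^2 * (f τ)^2 + (2 * l) * (f τ * g τ) + (g τ)^2 := by
        funext τ; ring
      rw [this]
      rw [intervalIntegral.integral_add ((hif2.const_mul _).add (hifg.const_mul _)) hig2,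
        intervalIntegral.integral_add (hif2.const_mul _) (hifg.const_mul _),
        intervalIntegral.integral_const_mul, intervalIntegral.integral_const_mul]
    nlinarith [h1, h2]
  have hdisc : discrim A (2 * B) C ≤ 0 := discrim_le_zero hquad
  rw [discrim] at hdisc
  have hB2 : B ^ 2 ≤ A * C := by nlinarith
  calc B ≤ |B| := le_abs_self B
    _ = Real.sqrt (B ^ 2) := (Real.sqrt_sq_eq_abs B).symm
    _ ≤ Real.sqrt (A * C) := Real.sqrt_le_sqrt hB2
    _ = Real.sqrt A * Real.sqrt C := Real.sqrt_mul hA0 C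

theorem stmt11 (a b μ : ℝ) (hab : a < b) (hμ : 0 ≤ μ)
    (θ dθ ρ dρ : ℝ → ℝ)
    (hθ : ∀ τ ∈ Set.Icc a b, HasDerivAt θ (dθ τ) τ)
    (hρ : ∀ τ ∈ Set.Icc a b, HasDerivAt ρ (dρ τ) τ)
    (hcθ : ContinuousOn dθ (Set.Icc a b))
    (hcρ : ContinuousOn dρ (Set.Icc a b))
    (heq : ∀ τ ∈ Set.Icc a b, dθ τ + μ * θ τ = dρ τ) :
    ∀ t ∈ Set.Icc a b,
      (1/2) * t * (θ t) ^ 2 - (1/2) * a * (θ a) ^ 2 + μ * ∫ τ in a..t, τ * (θ τ) ^ 2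
        ≤ Real.sqrt (∫ τ in a..t, τ ^ 2 * (dρ τ) ^ 2) * Real.sqrt (∫ τ in a..t, (θ τ) ^ 2)
          + (1/2) * ∫ τ in a..t, (θ τ) ^ 2 := by
  intro t ht
  obtain ⟨hta, htb⟩ := ht
  have hsub : Set.Icc a t ⊆ Set.Icc a b := Set.Icc_subset_Icc le_rfl htb
  have hu : Set.uIcc a t = Set.Icc a t := Set.uIcc_of_le hta
  -- continuity of θ on Icc a b
  have hθc : ContinuousOn θ (Set.Icc a b) := fun x hx =>
    (hθ x hx).continuousAt.continuousWithinAt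
  have hθct : ContinuousOn θ (Set.Icc a t) := hθc.mono hsub
  have hθcu : ContinuousOn θ (Set.uIcc a t) := hu ▸ hθct
  have hcρt : ContinuousOn dρ (Set.Icc a t) := hcρ.mono hsub
  have hcθu : ContinuousOn dθ (Set.uIcc a t) := hu ▸ (hcθ.mono hsub)
  have hcρu : ContinuousOn dρ (Set.uIcc a t) := hu ▸ hcρt
  have hid : ContinuousOn (fun τ : ℝ => τ) (Set.uIcc a t) := continuousOn_id
  -- FTC for F τ = (1/2) τ θ(τ)^2
  have hftc : (∫ τ in a..t, (1/2) * (θ τ)^2 + τ * θ τ * dθ τ)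
      = (1/2) * t * (θ t)^2 - (1/2) * a * (θ a)^2 := by
    apply intervalIntegral.integral_eq_sub_of_hasDerivAt
    · intro x hx
      have hxb : x ∈ Set.Icc a b := hsub (hu ▸ hx)
      have h1 : HasDerivAt (fun τ : ℝ => (1/2 : ℝ) * τ) (1/2) x := by
        simpa using (hasDerivAt_id x).const_mul ((1:ℝ)/2)
      have h2 : HasDerivAt (fun τ => (θ τ)^2) (2 * θ x ^ 1 * dθ x) x := (hθ x hxb).pow 2
      have := h1.fun_mul h2
      refine this.congr_deriv ?_
      ring
    · apply ContinuousOn.intervalIntegrable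
      exact ((hθcu.pow 2).const_smul ((1:ℝ)/2)).add ((hid.mul hθcu).mul hcθu)
  -- rewrite integrand using the equation
  have hintegrands : Set.EqOn (fun τ => (1/2) * (θ τ)^2 + τ * θ τ * dθ τ)
      (fun τ => ((1/2) * (θ τ)^2 + (τ * dρ τ) * θ τ) - μ * (τ * (θ τ)^2)) (Set.uIcc a t) := by
    intro x hx
    have hxb : x ∈ Set.Icc a b := hsub (hu ▸ hx)
    have := heq x hxb
    simp only
    rw [show dθ x = dρ x - μ * θ x from by linarith]
    ring
  have hI1 : IntervalIntegrable (fun τ => (1/2) * (θ τ)^2 + (τ * dρ τ) * θ τ) volume a t := by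
    apply ContinuousOn.intervalIntegrable
    exact ((hθcu.pow 2).const_smul ((1:ℝ)/2)).add ((hid.mul hcρu).mul hθcu)
  have hI2 : IntervalIntegrable (fun τ => μ * (τ * (θ τ)^2)) volume a t := by
    apply ContinuousOn.intervalIntegrable
    exact (hid.mul (hθcu.pow 2)).const_smul μ
  have hIθ2 : IntervalIntegrable (fun τ => (1/2 : ℝ) * (θ τ)^2) volume a t := by
    apply ContinuousOn.intervalIntegrable
    exact (hθcu.pow 2).const_smul ((1:ℝ)/2)
  have hIfg : IntervalIntegrable (fun τ => (τ * dρ τ) * θ τ) volume a t := by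
    apply ContinuousOn.intervalIntegrable
    exact (hid.mul hcρu).mul hθcu
  have hsplit : (∫ τ in a..t, (1/2) * (θ τ)^2 + τ * θ τ * dθ τ)
      = (1/2) * (∫ τ in a..t, (θ τ)^2) + (∫ τ in a..t, (τ * dρ τ) * θ τ)
        - μ * (∫ τ in a..t, τ * (θ τ)^2) := by
    rw [intervalIntegral.integral_congr hintegrands,
      intervalIntegral.integral_sub (hIθ2.add hIfg) hI2,
      intervalIntegral.integral_add hIθ2 hIfg,
      intervalIntegral.integral_const_mul, intervalIntegral.integral_const_mul]
  -- Cauchy–Schwarz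
  have hcs := cs_interval a t hta (fun τ => τ * dρ τ) θ
    ((continuousOn_id : ContinuousOn (fun τ : ℝ => τ) (Set.Icc a t)).mul hcρt) hθct
  have hrw : (∫ τ in a..t, (fun τ => τ * dρ τ) τ ^ 2) = ∫ τ in a..t, τ ^ 2 * (dρ τ)^2 := by
    congr 1; funext τ; ring
  rw [hrw] at hcs
  linarith [hftc, hsplit, hcs]
end
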